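/- (Relating smooth min- and max-relative entropies) For density matrices ρ, σ and ε₁, ε₂ ≥ 0 with ε₁ + ε₂ < 1: D_min^{ε₁}(ρ‖σ) ≤ D_max^{ε₂}(ρ‖σ) + log₂(1/(1 − ε₁ − ε₂)). -/

import Mathlib

open Matrix
open scoped BigOperators ComplexOrder

/-- Apply a real function to a Hermitian matrix via its spectral decomposition
(junk value `0` for non-Hermitian input). -/
noncomputable def mfun {n : Type*} [Fintype n] [DecidableEq n]
    (f : ℝ → ℝ) (A : Matrix n n ℂ) : Matrix n n ℂ :=
  if h : A.IsHermitian then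
    (h.eigenvectorUnitary : Matrix n n ℂ) *
      Matrix.diagonal (fun i => (f (h.eigenvalues i) : ℂ)) *
      star (h.eigenvectorUnitary : Matrix n n ℂ)
  else 0

/-- Real power of a Hermitian matrix. -/
noncomputable def mpow {n : Type*} [Fintype n] [DecidableEq n]
    (A : Matrix n n ℂ) (p : ℝ) : Matrix n n ℂ :=
  mfun (fun x => x ^ p) A

/-- Square root of a positive semidefinite matrix. -/
noncomputable def msqrt {n : Type*} [Fintype n] [DecidableEq n]
    (A : Matrix n n ℂ) : Matrix n n ℂ :=
  mfun Real.sqrt A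

/-- Trace norm (Schatten 1-norm). -/
noncomputable def traceNorm {n : Type*} [Fintype n] [DecidableEq n]
    (A : Matrix n n ℂ) : ℝ :=
  ((msqrt (Aᴴ * A)).trace).re

/-- Schatten `p`-norm. -/
noncomputable def schattenNorm {n : Type*} [Fintype n] [DecidableEq n]
    (p : ℝ) (A : Matrix n n ℂ) : ℝ :=
  (((mfun (fun x => x ^ (p / 2)) (Aᴴ * A)).trace).re) ^ (1 / p)

/-- Uhlmann fidelity `‖√ρ √σ‖₁²`. -/
noncomputable def fidelity {n : Type*} [Fintype n] [DecidableEq n]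
    (ρ σ : Matrix n n ℂ) : ℝ :=
  (traceNorm (msqrt ρ * msqrt σ)) ^ 2

/-- A density matrix: positive semidefinite with unit trace. -/
def IsDensity {n : Type*} [Fintype n] (ρ : Matrix n n ℂ) : Prop :=
  ρ.PosSemidef ∧ ρ.trace = 1

/-- A CPTP map (quantum channel): Choi matrix PSD and trace preserving. -/
def IsCPTP {I J : Type*} [Fintype I] [DecidableEq I] [Fintype J] [DecidableEq J]
    (N : Matrix I I ℂ →ₗ[ℂ] Matrix J J ℂ) : Prop :=
  (Matrix.of (fun (p q : I × J) =>
      N (Matrix.single p.1 q.1 1) p.2 q.2)).PosSemidef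
  ∧ ∀ A : Matrix I I ℂ, (N A).trace = A.trace

/-- `P` is the orthogonal projection onto the support of `ρ`. -/
def IsSupportProj {n : Type*} [Fintype n] (ρ P : Matrix n n ℂ) : Prop :=
  P.IsHermitian ∧ P * P = P ∧
    LinearMap.range P.mulVecLin = LinearMap.range ρ.mulVecLin

/-- Max-relative entropy `D_max(ρ‖σ) := inf {λ ≥ 0 : ρ ≤ 2^λ σ}` (with value `⊤` if
no such `λ` exists). -/
noncomputable def Dmax {n : Type*} [Fintype n] (ρ σ : Matrix n n ℂ) : EReal :=
  sInf {x : EReal | ∃ l : ℝ, 0 ≤ l ∧ (((2:ℝ) ^ l) • σ - ρ).PosSemidef ∧ x = (l : EReal)}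

/-- Smooth max-relative entropy (trace-distance smoothing). -/
noncomputable def DmaxSmooth {n : Type*} [Fintype n] [DecidableEq n]
    (ε : ℝ) (ρ σ : Matrix n n ℂ) : EReal :=
  sInf {x : EReal | ∃ ρt : Matrix n n ℂ, IsDensity ρt ∧
    (1/2) * traceNorm (ρt - ρ) ≤ ε ∧ x = Dmax ρt σ}

/-- Smooth min-relative entropy (hypothesis testing relative entropy). -/
noncomputable def DminSmooth {n : Type*} [Fintype n] [DecidableEq n]
    (ε : ℝ) (ρ σ : Matrix n n ℂ) : ℝ :=
  - Real.logb 2 (sInf {t : ℝ | ∃ Λ : Matrix n n ℂ, Λ.PosSemidef ∧ (1 - Λ).PosSemidef ∧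
      1 - ε ≤ ((Λ * ρ).trace).re ∧ t = ((Λ * σ).trace).re})

/-- Petz–Rényi relative entropy `D_α(ρ‖σ) = (α−1)⁻¹ log₂ Tr[ρ^α σ^{1−α}]`. -/
noncomputable def Dpetz {n : Type*} [Fintype n] [DecidableEq n]
    (α : ℝ) (ρ σ : Matrix n n ℂ) : ℝ :=
  (α - 1)⁻¹ * Real.logb 2 (((mpow ρ α * mpow σ (1 - α)).trace).re)

/-- Sandwiched Rényi relative entropy
`D̃_α(ρ‖σ) = (α−1)⁻¹ log₂ Tr[(σ^{(1−α)/2α} ρ σ^{(1−α)/2α})^α]`. -/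
noncomputable def Dsand {n : Type*} [Fintype n] [DecidableEq n]
    (α : ℝ) (ρ σ : Matrix n n ℂ) : ℝ :=
  (α - 1)⁻¹ * Real.logb 2
    (((mpow (mpow σ ((1 - α)/(2*α)) * ρ * mpow σ ((1 - α)/(2*α))) α).trace).re)

/-- Umegaki relative entropy `D(ρ‖σ) = Tr[ρ (log₂ ρ − log₂ σ)]`. -/
noncomputable def relEnt {n : Type*} [Fintype n] [DecidableEq n]
    (ρ σ : Matrix n n ℂ) : ℝ :=
  ((ρ * (mfun (Real.logb 2) ρ - mfun (Real.logb 2) σ)).trace).re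

/-- `n`-fold tensor (Kronecker) power of a matrix. -/
noncomputable def tpow {I : Type*} (A : Matrix I I ℂ) (k : ℕ) :
    Matrix (Fin k → I) (Fin k → I) ℂ :=
  Matrix.of fun i j => ∏ t, A (i t) (j t)

/-- The qubit state `|0⟩⟨0|`. -/
noncomputable def e00 : Matrix (Fin 2) (Fin 2) ℂ := Matrix.single 0 0 1

/-- The qubit state `|1⟩⟨1|`. -/
noncomputable def e11 : Matrix (Fin 2) (Fin 2) ℂ := Matrix.single 1 1 1

/-- The state `π_M = M⁻¹|0⟩⟨0| + (1 − M⁻¹)|1⟩⟨1|`. -/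
noncomputable def piM (M : ℝ) : Matrix (Fin 2) (Fin 2) ℂ :=
  (M⁻¹ : ℝ) • e00 + ((1 - M⁻¹ : ℝ)) • e11


/-! If `ρ̃` is `ε₂`-close to `ρ` in trace distance and `ρ̃ ≤ 2^λ σ`, then any test `0 ≤ Λ ≤ 1`
accepting `ρ` with probability `≥ 1 - ε₁` accepts `ρ̃` with probability `≥ 1 - ε₁ - ε₂`, because
`Tr[Λ(ρ - ρ̃)] ≤ Tr[(ρ - ρ̃)⁺] = ½‖ρ - ρ̃‖₁` for traceless `ρ - ρ̃`. Hence
`Tr[Λσ] ≥ 2^{-λ} Tr[Λρ̃] ≥ 2^{-λ}(1 - ε₁ - ε₂)`, and taking the infimum over `Λ`, then over `λ`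
and `ρ̃`, gives the bound. -/

open scoped MatrixOrder

namespace Matrix

variable {𝕜 n : Type*} [RCLike 𝕜] [Fintype n] [DecidableEq n]

lemma trace_mul_nonneg {A B : Matrix n n 𝕜} (hA : 0 ≤ A) (hB : 0 ≤ B) :
    0 ≤ (A * B).trace := by
  set s := CFC.sqrt A
  have hs : IsSelfAdjoint s := (CFC.sqrt_nonneg A).isSelfAdjoint
  calc 0 ≤ (star s * B * s).trace := (star_left_conjugate_nonneg hB s).posSemidef.trace_nonneg
    _ = (A * B).trace := by
      rw [hs.star_eq, trace_mul_cycle, ← CFC.sqrt_mul_sqrt_self A hA]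

lemma trace_mul_le_trace_mul_of_le {Λ A B : Matrix n n 𝕜} (hΛ : 0 ≤ Λ) (hAB : A ≤ B) :
    (Λ * A).trace ≤ (Λ * B).trace := by
  have := trace_mul_nonneg hΛ (sub_nonneg.mpr hAB)
  rwa [mul_sub, trace_sub, sub_nonneg] at this

lemma trace_mul_le_trace_posPart {Λ Δ : Matrix n n 𝕜} (hΛ₀ : 0 ≤ Λ) (hΛ₁ : Λ ≤ 1)
    (hΔ : IsSelfAdjoint Δ) : (Λ * Δ).trace ≤ (Δ⁺).trace := by
  have hpos : 0 ≤ ((1 - Λ) * Δ⁺).trace :=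
    trace_mul_nonneg (sub_nonneg.mpr hΛ₁) (CFC.posPart_nonneg Δ)
  have hneg : 0 ≤ (Λ * Δ⁻).trace := trace_mul_nonneg hΛ₀ (CFC.negPart_nonneg Δ)
  conv_lhs => rw [← CFC.posPart_sub_negPart Δ hΔ]
  rw [sub_mul, one_mul, trace_sub] at hpos
  rw [mul_sub, trace_sub]
  linear_combination hpos + hneg

lemma two_mul_trace_mul_le_trace_abs {Λ Δ : Matrix n n 𝕜} (hΛ₀ : 0 ≤ Λ) (hΛ₁ : Λ ≤ 1)
    (hΔ : IsSelfAdjoint Δ) (htr : Δ.trace = 0) :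
    2 * (Λ * Δ).trace ≤ (CFC.abs Δ).trace := by
  have habs : (CFC.abs Δ).trace = 2 * (Δ⁺).trace := by
    rw [← add_zero (CFC.abs Δ).trace, ← htr, ← trace_add, CFC.abs_add_self Δ hΔ, trace_smul,
      nsmul_eq_mul, Nat.cast_ofNat]
  rw [habs]
  exact mul_le_mul_of_nonneg_left (trace_mul_le_trace_posPart hΛ₀ hΛ₁ hΔ) zero_le_two

end Matrix

section Entropies

variable {n : Type*} [Fintype n] [DecidableEq n]

lemma mfun_eq_cfc (f : ℝ → ℝ) {A : Matrix n n ℂ} (hA : A.IsHermitian) :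
    mfun f A = cfc f A := by
  rw [mfun, dif_pos hA, hA.cfc_eq, Matrix.IsHermitian.cfc, Unitary.conjStarAlgAut_apply]
  rfl

lemma msqrt_eq_cfcSqrt {A : Matrix n n ℂ} (hA : 0 ≤ A) : msqrt A = CFC.sqrt A := by
  rw [msqrt, mfun_eq_cfc _ hA.posSemidef.isHermitian, CFC.sqrt_eq_real_sqrt A hA, cfcₙ_eq_cfc]

lemma traceNorm_eq_re_trace_abs (A : Matrix n n ℂ) : traceNorm A = (CFC.abs A).trace.re := by
  rw [traceNorm, msqrt_eq_cfcSqrt (Matrix.posSemidef_conjTranspose_mul_self A).nonneg, CFC.abs,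
    Matrix.star_eq_conjTranspose]

lemma traceNorm_sub_comm (A B : Matrix n n ℂ) : traceNorm (A - B) = traceNorm (B - A) := by
  rw [traceNorm_eq_re_trace_abs, ← CFC.abs_neg, neg_sub, traceNorm_eq_re_trace_abs]

lemma re_trace_mul_le_add_half_traceNorm {Λ ρ ρt : Matrix n n ℂ} (hΛ₀ : 0 ≤ Λ) (hΛ₁ : Λ ≤ 1)
    (hρ : ρ.IsHermitian) (hρt : ρt.IsHermitian) (htr : ρ.trace = ρt.trace) :
    (Λ * ρ).trace.re ≤ (Λ * ρt).trace.re + (1 / 2) * traceNorm (ρt - ρ) := by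
  have hΔ : 2 * (Λ * (ρ - ρt)).trace ≤ (CFC.abs (ρ - ρt)).trace :=
    Matrix.two_mul_trace_mul_le_trace_abs hΛ₀ hΛ₁ (hρ.sub hρt)
      (by rw [Matrix.trace_sub, htr, sub_self])
  have hre := (Complex.le_def.mp hΔ).1
  rw [two_mul, Complex.add_re, mul_sub, Matrix.trace_sub, Complex.sub_re] at hre
  rw [traceNorm_sub_comm, traceNorm_eq_re_trace_abs]
  linarith

lemma dminSmooth_le_neg_logb {ε c : ℝ} {ρ σ : Matrix n n ℂ} (hρ : 1 - ε ≤ ρ.trace.re)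
    (hc : 0 < c)
    (hσ : ∀ Λ : Matrix n n ℂ, 0 ≤ Λ → Λ ≤ 1 → 1 - ε ≤ (Λ * ρ).trace.re → c ≤ (Λ * σ).trace.re) :
    DminSmooth ε ρ σ ≤ -Real.logb 2 c := by
  -- the test `Λ = 1` keeps the infimum away from the junk value `sInf ∅ = 0`
  have hne : Set.Nonempty {t : ℝ | ∃ Λ : Matrix n n ℂ, Λ.PosSemidef ∧ (1 - Λ).PosSemidef ∧
      1 - ε ≤ ((Λ * ρ).trace).re ∧ t = ((Λ * σ).trace).re} :=
    ⟨_, 1, Matrix.PosSemidef.one, by simpa using Matrix.PosSemidef.zero, by simpa using hρ, rfl⟩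
  have hinf := le_csInf hne fun t ⟨Λ, hΛ₀, hΛ₁, hΛρ, ht⟩ => ht ▸ hσ Λ hΛ₀.nonneg hΛ₁ hΛρ
  exact neg_le_neg (Real.logb_le_logb_of_le one_lt_two hc hinf)

lemma dminSmooth_le_of_le_rpow_smul {ρ σ ρt : Matrix n n ℂ} {ε₁ ε₂ l : ℝ} (hρ : IsDensity ρ)
    (hρt : IsDensity ρt) (h1 : 0 ≤ ε₁) (h12 : ε₁ + ε₂ < 1)
    (hclose : (1 / 2) * traceNorm (ρt - ρ) ≤ ε₂) (hle : ρt ≤ ((2 : ℝ) ^ l) • σ) :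
    DminSmooth ε₁ ρ σ ≤ l + Real.logb 2 (1 / (1 - ε₁ - ε₂)) := by
  have h2l : 0 < (2 : ℝ) ^ l := Real.rpow_pos_of_pos two_pos l
  have hρ1 : 1 - ε₁ ≤ ρ.trace.re := by rw [hρ.2, Complex.one_re]; linarith
  calc DminSmooth ε₁ ρ σ ≤ -Real.logb 2 ((1 - ε₁ - ε₂) / 2 ^ l) := by
        refine dminSmooth_le_neg_logb hρ1 (div_pos (by linarith) h2l) fun Λ hΛ₀ hΛ₁ hΛρ => ?_
        have hρt' := re_trace_mul_le_add_half_traceNorm hΛ₀ hΛ₁ hρ.1.1 hρt.1.1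
          (hρ.2.trans hρt.2.symm)
        have hσ := (Complex.le_def.mp (Matrix.trace_mul_le_trace_mul_of_le hΛ₀ hle)).1
        rw [Matrix.mul_smul, Matrix.trace_smul, Complex.real_smul, Complex.re_ofReal_mul] at hσ
        rw [div_le_iff₀ h2l]
        linarith
    _ = l + Real.logb 2 (1 / (1 - ε₁ - ε₂)) := by
        rw [Real.logb_div (by linarith) h2l.ne', Real.logb_rpow two_pos (by norm_num), one_div,
          Real.logb_inv]
        ring

end Entropies

theorem dminSmooth_le_dmaxSmooth_general {n : Type*} [Fintype n] [DecidableEq n]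
    (ρ σ : Matrix n n ℂ) (hρ : IsDensity ρ)
    (ε₁ ε₂ : ℝ) (h1 : 0 ≤ ε₁) (h12 : ε₁ + ε₂ < 1) :
    ((DminSmooth ε₁ ρ σ : ℝ) : EReal)
      ≤ DmaxSmooth ε₂ ρ σ + ((Real.logb 2 (1/(1 - ε₁ - ε₂)) : ℝ) : EReal) := by
  set c := Real.logb 2 (1 / (1 - ε₁ - ε₂))
  have hsub : ((DminSmooth ε₁ ρ σ - c : ℝ) : EReal) ≤ DmaxSmooth ε₂ ρ σ := by
    refine le_sInf ?_
    rintro _ ⟨ρt, hρt, hclose, rfl⟩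
    refine le_sInf ?_
    rintro _ ⟨l, -, hle, rfl⟩
    rw [EReal.coe_le_coe_iff, sub_le_iff_le_add]
    exact dminSmooth_le_of_le_rpow_smul hρ hρt h1 h12 hclose hle
  calc ((DminSmooth ε₁ ρ σ : ℝ) : EReal)
      = ((DminSmooth ε₁ ρ σ - c : ℝ) : EReal) + (c : EReal) := by
        rw [← EReal.coe_add, sub_add_cancel]
    _ ≤ DmaxSmooth ε₂ ρ σ + c := add_le_add_left hsub _

theorem dminSmooth_le_dmaxSmooth {n : Type*} [Fintype n] [DecidableEq n]
    (ρ σ : Matrix n n ℂ) (hρ : IsDensity ρ) (hσ : IsDensity σ)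
    (ε₁ ε₂ : ℝ) (h1 : 0 ≤ ε₁) (h2 : 0 ≤ ε₂) (h12 : ε₁ + ε₂ < 1) :
    ((DminSmooth ε₁ ρ σ : ℝ) : EReal)
      ≤ DmaxSmooth ε₂ ρ σ + ((Real.logb 2 (1/(1 - ε₁ - ε₂)) : ℝ) : EReal) :=
  dminSmooth_le_dmaxSmooth_general ρ σ hρ ε₁ ε₂ h1 h12
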